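/- arXiv:1210.2801 — 4 statements merged into one kernel-verified Lean document; each statement's English description precedes it below -/
import Mathlib

section
/- Let G be a finite abelian group of order mn with a subgroup N of order n, and let D be a k-element subset of G. Then D is an (m,n,k,λ)-relative difference set relative to N if and only if: for every character χ of G non-trivial on N, |χ(D)| = √k, and for every non-principal character χ of G trivial on N, |χ(D)| = √(k - λn). -/
/-!
Characters of a finite abelian group `G` separate the elements of `ℤ[G]` (Fourier inversion), so
the group ring equation `D D⁻¹ = k + λ (G - N)` holds iff it holds after applying every character
`χ`. On the left `χ(D D⁻¹) = |χ(D)|²`; on the right orthogonality gives `k`, `k - λ n` or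
`k + λ (m n - n)` according as `χ` is nontrivial on `N`, nonprincipal but trivial on `N`, or
principal. In the principal case both sides agree by the counting identity `k² = k + λ (m n - n)`.
-/

open Finset
open scoped Pointwise Classical

/-- The formal sum `∑_{x ∈ s} x` of a finite subset of a group in the
integral group ring `ℤ[G]`. -/
noncomputable def fsum {G : Type*} [Group G] [DecidableEq G] (s : Finset G) :
    MonoidAlgebra ℤ G :=
  ∑ x ∈ s, MonoidAlgebra.single x 1

namespace MonoidHom

variable {G : Type*} [CommGroup G] [Fintype G]

lemma norm_apply_eq_one (χ : G →* ℂ) (g : G) : ‖χ g‖ = 1 :=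
  Complex.norm_eq_one_of_pow_eq_one (by rw [← map_pow, pow_card_eq_one, map_one])
    Fintype.card_ne_zero

lemma apply_inv_eq_conj (χ : G →* ℂ) (g : G) : χ g⁻¹ = starRingEnd ℂ (χ g) := by
  rw [map_inv, Complex.inv_eq_conj (χ.norm_apply_eq_one g)]

noncomputable instance : Fintype (G →* ℂ) :=
  Fintype.ofEquiv _ (AddChar.toMonoidHomEquiv : AddChar (Additive G) ℂ ≃ (G →* ℂ))

lemma sum_apply_eq_ite [DecidableEq G] (g : G) :
    ∑ χ : G →* ℂ, χ g = if g = 1 then (Fintype.card G : ℂ) else 0 :=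
  calc ∑ χ : G →* ℂ, χ g = ∑ ψ : AddChar (Additive G) ℂ, ψ (Additive.ofMul g) :=
        (Fintype.sum_equiv (AddChar.toMonoidHomEquiv : AddChar (Additive G) ℂ ≃ (G →* ℂ))
          _ _ fun _ => rfl).symm
    _ = _ := by simpa using AddChar.sum_apply_eq_ite (Additive.ofMul g)

lemma sum_subgroup_eq_zero (χ : G →* ℂ) {N : Subgroup G} (h : ∃ x ∈ N, χ x ≠ 1) :
    ∑ g ∈ univ.filter (· ∈ N), χ g = 0 := by
  obtain ⟨x, hxN, hx⟩ := h
  have hne : χ.comp N.subtype ≠ 1 := fun h1 => hx (DFunLike.congr_fun h1 ⟨x, hxN⟩)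
  rw [sum_subtype _ fun x => mem_filter_univ x]
  exact sum_hom_units_eq_zero _ hne

lemma sum_subgroup_eq_card (χ : G →* ℂ) {N : Subgroup G} (h : ∀ x ∈ N, χ x = 1) :
    ∑ g ∈ univ.filter (· ∈ N), χ g = Fintype.card N := by
  rw [sum_congr rfl fun g hg => h g ((mem_filter_univ g).1 hg), sum_const, nsmul_one,
    ← Fintype.card_subtype]

end MonoidHom

namespace MonoidAlgebra

variable {G : Type*} [CommGroup G] [Fintype G]

lemma lift_apply_eq_sum (χ : G →* ℂ) (a : MonoidAlgebra ℤ G) :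
    lift ℤ ℂ G χ a = ∑ g, (a.coeff g : ℂ) * χ g := by
  rw [lift_apply, Finsupp.sum_fintype _ _ fun g => zero_smul ℤ (χ g)]
  simp only [zsmul_eq_mul]

lemma sum_apply_inv_mul_lift (a : MonoidAlgebra ℤ G) (g₀ : G) :
    ∑ χ : G →* ℂ, χ g₀⁻¹ * lift ℤ ℂ G χ a = Fintype.card G * a.coeff g₀ := by
  simp_rw [lift_apply_eq_sum, mul_sum, mul_left_comm _ (a.coeff _ : ℂ), ← map_mul]
  rw [sum_comm]
  simp_rw [← mul_sum, MonoidHom.sum_apply_eq_ite, inv_mul_eq_one, mul_ite, mul_zero,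
    sum_ite_eq]
  simp [mul_comm]

lemma eq_iff_forall_lift_eq {a b : MonoidAlgebra ℤ G} :
    a = b ↔ ∀ χ : G →* ℂ, lift ℤ ℂ G χ a = lift ℤ ℂ G χ b := by
  refine ⟨fun h _ => h ▸ rfl, fun h => ?_⟩
  ext g
  have key := congrArg (· / (Fintype.card G : ℂ))
    ((sum_apply_inv_mul_lift a g).symm.trans ((sum_congr rfl fun χ _ => by rw [h χ]).trans
      (sum_apply_inv_mul_lift b g)))
  simpa using key

end MonoidAlgebra

open MonoidAlgebra

lemma lift_fsum {G A : Type*} [Group G] [DecidableEq G] [Ring A] (χ : G →* A) (s : Finset G) :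
    lift ℤ A G χ (fsum s) = ∑ x ∈ s, χ x := by
  simp [fsum]

section

variable {G : Type*} [CommGroup G] [Fintype G] [DecidableEq G]

lemma lift_fsum_mul_fsum_inv (χ : G →* ℂ) (s : Finset G) :
    lift ℤ ℂ G χ (fsum s * fsum s⁻¹) = Complex.normSq (∑ x ∈ s, χ x) := by
  have hinv : ∑ x ∈ s⁻¹, χ x = starRingEnd ℂ (∑ x ∈ s, χ x) := by
    rw [sum_inv_index, map_sum]
    simp_rw [χ.apply_inv_eq_conj]
  rw [map_mul, lift_fsum, lift_fsum, hinv, Complex.mul_conj]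

noncomputable def relDiffSetRhs (N : Subgroup G) (k lam : ℤ) : MonoidAlgebra ℤ G :=
  k • 1 + lam • (fsum (univ : Finset G) - fsum (univ.filter (· ∈ N)))

variable (N : Subgroup G) (k lam : ℤ) (χ : G →* ℂ)

lemma lift_relDiffSetRhs :
    lift ℤ ℂ G χ (relDiffSetRhs N k lam) =
      k + lam * (∑ g, χ g - ∑ g ∈ univ.filter (· ∈ N), χ g) := by
  simp [relDiffSetRhs, lift_fsum, zsmul_eq_mul]

lemma lift_relDiffSetRhs_of_exists_ne_one (hχ : ∃ x ∈ N, χ x ≠ 1) :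
    lift ℤ ℂ G χ (relDiffSetRhs N k lam) = k := by
  have hne : χ ≠ 1 := by
    rintro rfl
    obtain ⟨x, -, hx⟩ := hχ
    exact hx rfl
  rw [lift_relDiffSetRhs, sum_hom_units_eq_zero χ hne, χ.sum_subgroup_eq_zero hχ]
  ring

lemma lift_relDiffSetRhs_of_forall_eq_one (hχ : χ ≠ 1) (hN : ∀ x ∈ N, χ x = 1) :
    lift ℤ ℂ G χ (relDiffSetRhs N k lam) = k - lam * Fintype.card N := by
  rw [lift_relDiffSetRhs, sum_hom_units_eq_zero χ hχ, χ.sum_subgroup_eq_card hN]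
  ring

lemma lift_relDiffSetRhs_one :
    lift ℤ ℂ G 1 (relDiffSetRhs N k lam) = k + lam * (Fintype.card G - Fintype.card N) := by
  rw [lift_relDiffSetRhs, (1 : G →* ℂ).sum_subgroup_eq_card fun _ _ => rfl]
  simp

lemma lift_fsum_mul_fsum_inv_one_eq {D : Finset G} {k lam : ℕ} (hk : D.card = k)
    (hcount : k * k = k + lam * (Fintype.card G - Fintype.card N)) :
    lift ℤ ℂ G 1 (fsum D * fsum D⁻¹) = lift ℤ ℂ G 1 (relDiffSetRhs N k lam) := by
  have hcard : Fintype.card N ≤ Fintype.card G := Fintype.card_subtype_le _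
  have h := congrArg (Nat.cast : ℕ → ℂ) hcount
  push_cast [Nat.cast_sub hcard] at h
  rw [lift_fsum_mul_fsum_inv, lift_relDiffSetRhs_one]
  simp only [MonoidHom.one_apply, sum_const, hk, nsmul_one, Complex.normSq_natCast]
  push_cast
  linear_combination h

end

lemma Complex.norm_eq_sqrt_iff {z : ℂ} {r : ℝ} (hr : 0 ≤ r) :
    ‖z‖ = √r ↔ (normSq z : ℂ) = r := by
  rw [Complex.norm_def, Real.sqrt_inj (Complex.normSq_nonneg z) hr, Complex.ofReal_inj]

/-- a `k`-subset `D` of a finite abelian group `G` of order `mn`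
with a subgroup `N` of order `n` (parameters admissible) is an
`(m,n,k,λ)`-relative difference set relative to `N` iff `|χ(D)| = √k` for every
character nontrivial on `N`, and `|χ(D)| = √(k - λn)` for every non-principal
character trivial on `N`. -/
theorem stmt5 {G : Type*} [CommGroup G] [Fintype G] [DecidableEq G]
    (N : Subgroup G) (D : Finset G) (m n k lam : ℕ)
    (hn : Fintype.card N = n) (hmn : Fintype.card G = m * n)
    (hk : D.card = k) (hkn : lam * n ≤ k)
    (hcount : k * k = k + lam * (m * n - n)) :
    (fsum D * fsum D⁻¹ =
        (k : ℤ) • 1 +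
          (lam : ℤ) • (fsum (univ : Finset G) - fsum (univ.filter (· ∈ N)))) ↔
    ((∀ χ : G →* ℂ, (∃ x ∈ N, χ x ≠ 1) →
        ‖∑ d ∈ D, χ d‖ = Real.sqrt k) ∧
      (∀ χ : G →* ℂ, χ ≠ 1 → (∀ x ∈ N, χ x = 1) →
        ‖∑ d ∈ D, χ d‖ = Real.sqrt ((k : ℝ) - lam * n))) := by
  change fsum D * fsum D⁻¹ = relDiffSetRhs N k lam ↔ _
  have hkn' : (lam : ℝ) * n ≤ k := by exact_mod_cast hkn
  have hA (χ : G →* ℂ) (hχ : ∃ x ∈ N, χ x ≠ 1) :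
      lift ℤ ℂ G χ (fsum D * fsum D⁻¹) = lift ℤ ℂ G χ (relDiffSetRhs N k lam) ↔
        ‖∑ d ∈ D, χ d‖ = √k := by
    rw [lift_fsum_mul_fsum_inv, lift_relDiffSetRhs_of_exists_ne_one N _ _ χ hχ,
      Complex.norm_eq_sqrt_iff (Nat.cast_nonneg k)]
    push_cast
    rfl
  have hB (χ : G →* ℂ) (hχ : χ ≠ 1) (hN : ∀ x ∈ N, χ x = 1) :
      lift ℤ ℂ G χ (fsum D * fsum D⁻¹) = lift ℤ ℂ G χ (relDiffSetRhs N k lam) ↔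
        ‖∑ d ∈ D, χ d‖ = √((k : ℝ) - lam * n) := by
    rw [lift_fsum_mul_fsum_inv, lift_relDiffSetRhs_of_forall_eq_one N _ _ χ hχ hN, hn,
      Complex.norm_eq_sqrt_iff (sub_nonneg.2 hkn')]
    push_cast
    rfl
  rw [eq_iff_forall_lift_eq]
  refine ⟨fun h => ⟨fun χ hχ => (hA χ hχ).1 (h χ), fun χ hχ hN => (hB χ hχ hN).1 (h χ)⟩, ?_⟩
  rintro ⟨h₁, h₂⟩ χ
  by_cases hN : ∃ x ∈ N, χ x ≠ 1
  · exact (hA χ hN).2 (h₁ χ hN)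
  push Not at hN
  by_cases hχ : χ = 1
  · exact hχ ▸ lift_fsum_mul_fsum_inv_one_eq N hk (hn ▸ hmn ▸ hcount)
  · exact (hB χ hχ hN).2 (h₂ χ hχ hN)
end

section
/- Let q be a prime power, l ≥ 1, and tr: 𝔽_{q^l} → 𝔽_q the relative trace. Then R = {x ∈ 𝔽_{q^l}^* : tr(x) = 1} is a ((q^l-1)/(q-1), q-1, q^{l-1}, q^{l-2})-relative difference set in the multiplicative group 𝔽_{q^l}^* relative to the subgroup 𝔽_q^*; that is, in ℤ[𝔽_{q^l}^*], R R^{(-1)} = q^{l-1}·1 + q^{l-2}(𝔽_{q^l}^* - 𝔽_q^*). -/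
/-!
The relative trace is `algebraMap K F ∘ Algebra.trace K F`, and the trace is a surjective
`K`-linear form. The coefficient of `g` in `R R⁻¹` counts the `x` with `tr x = 1` and
`tr (g⁻¹ x) = 1`. For `g = 1` this is a fibre of `tr`, of size `q ^ (l - 1)`. For `g ∈ K^*`,
`g ≠ 1`, it is empty because `tr (g⁻¹ x) = g⁻¹ tr x`. For `g ∉ K`, nondegeneracy of the trace
form makes `x ↦ (tr x, tr (g⁻¹ x))` surjective onto `K × K`, so the fibre has size `q ^ (l - 2)`.
-/

open Finset
open scoped Pointwise Classical

/-- The relative trace `x ↦ ∑_{i<l} x^{q^i}`. -/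
def relTrace {F : Type*} [CommRing F] (q l : ℕ) (x : F) : F :=
  ∑ i ∈ Finset.range l, x ^ q ^ i

/-- The Singer relative difference set `{x ∈ F^* : tr(x) = 1}`. -/
noncomputable def singerRDS (F : Type*) [Field F] [Fintype F] (q l : ℕ) :
    Finset Fˣ :=
  (univ : Finset Fˣ).filter (fun x : Fˣ => relTrace q l (x : F) = 1)

/-- The subgroup `𝔽_q^*` of `𝔽_{q^l}^*`, as a finset of units. -/
noncomputable def baseUnits (K F : Type*) [Field K] [Field F] [Fintype K]
    [Fintype F] [Algebra K F] : Finset Fˣ :=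
  (univ : Finset Fˣ).filter (fun x => ∃ y : K, algebraMap K F y = (x : F))

theorem AddMonoidHom.card_fiber_mul_card_of_surjective {V W : Type*} [AddGroup V] [Fintype V]
    [AddGroup W] [Fintype W] (f : V →+ W) (hf : Function.Surjective f) (w : W) :
    #{v | f v = w} * Fintype.card W = Fintype.card V := by
  rw [← card_univ (α := V), card_eq_sum_card_fiberwise (s := univ) (f := f) (t := univ) (by simp),
    sum_congr rfl fun w' _ => card_fiber_eq_of_mem_range f (hf w') (hf w), sum_const,
    card_univ, smul_eq_mul, mul_comm]

theorem LinearMap.card_fiber_of_surjective {K V W : Type*} [Field K] [Fintype K]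
    [AddCommGroup V] [Module K V] [Fintype V] [AddCommGroup W] [Module K W] [Fintype W]
    (f : V →ₗ[K] W) (hf : Function.Surjective f) (w : W) :
    #{v | f v = w} = Fintype.card K ^ (Module.finrank K V - Module.finrank K W) := by
  have h := f.toAddMonoidHom.card_fiber_mul_card_of_surjective hf w
  rw [Module.card_eq_pow_finrank (K := K) (V := W), Module.card_eq_pow_finrank (K := K) (V := V),
    ← Nat.sub_add_cancel (LinearMap.finrank_le_finrank_of_surjective hf), pow_add] at h
  exact Nat.eq_of_mul_eq_mul_right (pow_pos Fintype.card_pos _) h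

section Trace

variable {K L : Type*} [Field K] [Field L] [Algebra K L]

theorem trace_prod_trace_mul_surjective [FiniteDimensional K L] [Algebra.IsSeparable K L]
    {c : L} (hc : c ∉ Set.range (algebraMap K L)) :
    Function.Surjective
      ((Algebra.trace K L).prod ((Algebra.trace K L).comp (LinearMap.mulLeft K c))) := by
  by_contra hns
  rw [← LinearMap.range_eq_top, ← Ne, ← lt_top_iff_ne_top] at hns
  obtain ⟨φ, hφ0, hφ⟩ := (LinearMap.range _).exists_le_ker_of_lt_top hns
  set a := φ (1, 0)
  set b := φ (0, 1)
  have hφ_apply (s t : K) : φ (s, t) = s * a + t * b := by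
    rw [show ((s, t) : K × K) = s • ((1 : K), (0 : K)) + t • ((0 : K), (1 : K)) by simp,
      map_add, map_smul, map_smul, smul_eq_mul, smul_eq_mul]
  have hcomb : algebraMap K L a + algebraMap K L b * c = 0 := by
    refine (traceForm_nondegenerate K L).1 _ fun x => ?_
    have hx : Algebra.trace K L x * a + Algebra.trace K L (c * x) * b = 0 := by
      simpa [hφ_apply] using hφ ⟨x, rfl⟩
    rw [Algebra.traceForm_apply, add_mul, mul_assoc, ← Algebra.smul_def, ← Algebra.smul_def,
      map_add, map_smul, map_smul, smul_eq_mul, smul_eq_mul, ← hx]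
    ring
  have hb : b = 0 := by
    by_contra hb
    exact hc ⟨-a / b, by
      rw [map_div₀, map_neg, div_eq_iff ((map_ne_zero _).2 hb)]
      linear_combination -hcomb⟩
  have ha : a = 0 := by simpa [hb] using hcomb
  exact hφ0 (LinearMap.ext fun ⟨s, t⟩ => by simp [hφ_apply, ha, hb])

theorem card_trace_eq_one_and_trace_algebraMap_mul_eq_one [Fintype L] {a : K} (ha : a ≠ 1) :
    #{x : L | Algebra.trace K L x = 1 ∧ Algebra.trace K L (algebraMap K L a * x) = 1} = 0 := by
  rw [card_eq_zero, filter_eq_empty_iff]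
  rintro x - ⟨h1, h2⟩
  rw [← Algebra.smul_def, map_smul, h1, smul_eq_mul, mul_one] at h2
  exact ha h2

end Trace

section FiniteField

variable {K L : Type*} [Field K] [Field L] [Fintype K] [Fintype L] [Algebra K L]

theorem card_trace_eq_one :
    #{x : L | Algebra.trace K L x = 1} = Fintype.card K ^ (Module.finrank K L - 1) := by
  rw [(Algebra.trace K L).card_fiber_of_surjective (Algebra.trace_surjective K L) 1,
    Module.finrank_self]

theorem card_trace_eq_one_and_trace_mul_eq_one_of_notMem_range {c : L}
    (hc : c ∉ Set.range (algebraMap K L)) :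
    #{x : L | Algebra.trace K L x = 1 ∧ Algebra.trace K L (c * x) = 1} =
      Fintype.card K ^ (Module.finrank K L - 2) := by
  have h := LinearMap.card_fiber_of_surjective _ (trace_prod_trace_mul_surjective hc) (1, 1)
  rw [Module.finrank_prod, Module.finrank_self] at h
  simpa [Prod.ext_iff] using h

theorem finrank_eq_of_card_eq_pow {q l : ℕ} (hq : Fintype.card K = q)
    (hL : Fintype.card L = q ^ l) : Module.finrank K L = l :=
  Nat.pow_right_injective (hq ▸ Fintype.one_lt_card)
    (show q ^ _ = q ^ l by rw [← hL, Module.card_eq_pow_finrank (K := K), hq])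

theorem relTrace_eq_algebraMap_trace {q l : ℕ} (hq : Fintype.card K = q)
    (hL : Fintype.card L = q ^ l) (x : L) :
    relTrace q l x = algebraMap K L (Algebra.trace K L x) := by
  rw [FiniteField.algebraMap_trace_eq_sum_pow, finrank_eq_of_card_eq_pow hq hL,
    Nat.card_eq_fintype_card, hq, relTrace]

end FiniteField

section GroupRing

variable {G : Type*} [Group G] [DecidableEq G]

theorem coeff_fsum (s : Finset G) (g : G) : (fsum s).coeff g = if g ∈ s then 1 else 0 := by
  simp [fsum, MonoidAlgebra.coeff_sum, Finsupp.single_apply]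

theorem coeff_fsum_mul_fsum_inv (s : Finset G) (g : G) :
    (fsum s * fsum s⁻¹).coeff g = #{x ∈ s | g⁻¹ * x ∈ s} := by
  rw [fsum, Finset.sum_mul, MonoidAlgebra.coeff_sum, Finsupp.finsetSum_apply]
  simp only [MonoidAlgebra.coeff_single_mul_apply, one_mul, coeff_fsum, mem_inv', mul_inv_rev,
    inv_inv]
  rw [sum_boole]

end GroupRing

theorem card_filter_units_eq {G₀ : Type*} [GroupWithZero G₀] [Fintype G₀] (p : G₀ → Prop)
    [DecidablePred p] (h0 : ¬ p 0) : #{u : G₀ˣ | p u} = #{x : G₀ | p x} := by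
  refine card_nbij (fun u => (u : G₀)) (fun u hu => by simpa using hu)
    (fun u _ v _ h => Units.ext h) fun x hx => ?_
  have hx0 : x ≠ 0 := by rintro rfl; exact h0 (by simpa using hx)
  exact ⟨Units.mk0 x hx0, by simpa using hx, rfl⟩

section Singer

variable {K F : Type*} [Field K] [Field F] [Fintype K] [Fintype F] [Algebra K F] {q l : ℕ}

theorem card_mem_singerRDS_inv_mul_mem (hq : Fintype.card K = q) (hF : Fintype.card F = q ^ l)
    (g : Fˣ) :
    #{x ∈ singerRDS F q l | g⁻¹ * x ∈ singerRDS F q l} =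
      #{x : F | Algebra.trace K F x = 1 ∧ Algebra.trace K F ((g : F)⁻¹ * x) = 1} := by
  have htr (x : F) : relTrace q l x = 1 ↔ Algebra.trace K F x = 1 := by
    rw [relTrace_eq_algebraMap_trace hq hF, ← map_one (algebraMap K F),
      (FaithfulSMul.algebraMap_injective K F).eq_iff]
  rw [← card_filter_units_eq _ (by simp)]
  congr 1
  ext x
  simp [singerRDS, htr]

theorem mem_baseUnits_iff_inv_mem_range (g : Fˣ) :
    g ∈ baseUnits K F ↔ (g : F)⁻¹ ∈ Set.range (algebraMap K F) := by
  simp only [baseUnits, mem_filter, mem_univ, true_and, Set.mem_range]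
  constructor
  · rintro ⟨y, hy⟩
    exact ⟨y⁻¹, by rw [map_inv₀, hy]⟩
  · rintro ⟨y, hy⟩
    exact ⟨y⁻¹, by rw [map_inv₀, hy, inv_inv]⟩

end Singer

theorem stmt6_general {K F : Type*} [Field K] [Field F] [Fintype K] [Fintype F]
    [Algebra K F] (q l : ℕ) (hq : Fintype.card K = q)
    (hF : Fintype.card F = q ^ l) :
    fsum (singerRDS F q l) * fsum (singerRDS F q l)⁻¹ =
      ((q : ℤ) ^ (l - 1)) • 1 +
        ((q : ℤ) ^ (l - 2)) •
          (fsum (univ : Finset Fˣ) - fsum (baseUnits K F)) := by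
  have hn := finrank_eq_of_card_eq_pow hq hF
  refine MonoidAlgebra.coeff_injective (Finsupp.ext fun g => ?_)
  rw [coeff_fsum_mul_fsum_inv, card_mem_singerRDS_inv_mul_mem hq hF]
  simp only [MonoidAlgebra.coeff_add, MonoidAlgebra.coeff_smul, MonoidAlgebra.coeff_sub,
    Finsupp.add_apply, Finsupp.smul_apply, Finsupp.sub_apply, coeff_fsum, MonoidAlgebra.one_def,
    MonoidAlgebra.coeff_single, Finsupp.single_apply, mem_univ, if_true]
  obtain rfl | hg1 := eq_or_ne g 1
  · have h1B : (1 : Fˣ) ∈ baseUnits K F := by simp [baseUnits]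
    simp [card_trace_eq_one, hn, hq, h1B]
  by_cases hgB : g ∈ baseUnits K F
  · obtain ⟨a, ha⟩ := (mem_baseUnits_iff_inv_mem_range g).1 hgB
    have ha1 : a ≠ 1 := by
      rintro rfl
      exact hg1 (Units.ext (inv_eq_one.1 (by simpa using ha.symm)))
    rw [← ha, card_trace_eq_one_and_trace_algebraMap_mul_eq_one ha1]
    simp [hgB, Ne.symm hg1]
  · rw [card_trace_eq_one_and_trace_mul_eq_one_of_notMem_range
      ((mem_baseUnits_iff_inv_mem_range g).not.1 hgB)]
    simp [hgB, Ne.symm hg1, hn, hq]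

/-- `R = {x ∈ 𝔽_{q^l}^* : tr_{q^l/q}(x) = 1}` is a
`((q^l-1)/(q-1), q-1, q^{l-1}, q^{l-2})`-relative difference set in `𝔽_{q^l}^*`
relative to `𝔽_q^*`, i.e. `R R^{(-1)} = q^{l-1}·1 + q^{l-2}(𝔽_{q^l}^* - 𝔽_q^*)`
in `ℤ[𝔽_{q^l}^*]`. -/
theorem stmt6 {K F : Type*} [Field K] [Field F] [Fintype K] [Fintype F]
    [Algebra K F] (q l : ℕ) (hq : Fintype.card K = q)
    (hF : Fintype.card F = q ^ l) (hl : 1 ≤ l) :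
    fsum (singerRDS F q l) * fsum (singerRDS F q l)⁻¹ =
      ((q : ℤ) ^ (l - 1)) • 1 +
        ((q : ℤ) ^ (l - 2)) •
          (fsum (univ : Finset Fˣ) - fsum (baseUnits K F)) :=
  stmt6_general q l hq hF
end

section
/- Let q be an odd prime power, l odd, η the quadratic character of 𝔽_{q^l}^* and η₀ the quadratic character of 𝔽_q^*. Let χ be a character of 𝔽_{q^l}^* trivial on 𝔽_q^*. Then G_{𝔽_{q^l}}(χη) = G_{𝔽_q}(η₀) · ∑_{y ∈ R} χ(y)η(y), where R = {x ∈ 𝔽_{q^l}^* : tr_{q^l/q}(x) = 1}. -/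
open Finset
open scoped Classical

/-- The quadratic character of a group of units: `1` on squares, `-1` on
non-squares. -/
noncomputable def quadChar {G : Type*} (x : G) [Monoid G] : ℂ :=
  if IsSquare x then 1 else -1

/- ---------- auxiliary lemmas ---------- -/

lemma modeq_aux {q l : ℕ} (hq : Odd q) (hl : Odd l) :
    q ^ l / 2 ≡ q / 2 [MOD q - 1] := by
  obtain ⟨r, hr⟩ := hq
  obtain ⟨m, hm⟩ := hl
  subst hr; subst hm
  set q := 2 * r + 1 with hqdef
  obtain ⟨k, hk⟩ := Nat.sub_dvd_pow_sub_pow (q ^ 2) 1 m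
  rw [one_pow] at hk
  have hq2 : q ^ 2 - 1 = 4 * r ^ 2 + 4 * r := by
    have : q ^ 2 = 4 * r ^ 2 + 4 * r + 1 := by rw [hqdef]; ring
    omega
  rw [hq2] at hk
  have hpos : 1 ≤ (q ^ 2) ^ m := Nat.one_le_pow _ _ (by positivity)
  have hpow : (q ^ 2) ^ m = 4 * r ^ 2 * k + 4 * r * k + 1 := by
    have h2 : (4 * r ^ 2 + 4 * r) * k = 4 * r ^ 2 * k + 4 * r * k := by ring
    omega
  have hql : q ^ (2 * m + 1) = 2 * (r + (2 * r) * (q * (r + 1) * k)) + 1 := by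
    have e1 : q ^ (2 * m + 1) = (q ^ 2) ^ m * q := by
      rw [pow_succ, pow_mul]
    rw [e1, hpow, hqdef]
    ring
  have h2 : q ^ (2 * m + 1) / 2 = r + (2 * r) * (q * (r + 1) * k) := by omega
  have h3 : q / 2 = r := by omega
  have h4 : q - 1 = 2 * r := by omega
  rw [h2, h3, h4]
  unfold Nat.ModEq
  rw [Nat.add_mul_mod_self_left]

lemma pow_card_div_two {K : Type*} [Field K] [Fintype K] {q l : ℕ}
    (hq : Fintype.card K = q) (hqodd : Odd q) (hl : Odd l) (y : Kˣ) :
    y ^ (q ^ l / 2) = y ^ (q / 2) := by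
  rw [pow_eq_pow_iff_modEq]
  refine (modeq_aux hqodd hl).of_dvd ?_
  have h : orderOf y ∣ Fintype.card Kˣ := orderOf_dvd_card
  rwa [Fintype.card_units, hq] at h

lemma quadChar_eq_ite {L : Type*} [Field L] [Fintype L] (hL : ringChar L ≠ 2) (x : Lˣ) :
    quadChar x = if (x : L) ^ (Fintype.card L / 2) = 1 then 1 else -1 := by
  unfold quadChar
  rw [FiniteField.unit_isSquare_iff hL x, Units.ext_iff]
  push_cast
  rfl

lemma quadChar_mul {L : Type*} [Field L] [Fintype L] (hL : ringChar L ≠ 2) (x y : Lˣ) :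
    quadChar (x * y) = quadChar x * quadChar y := by
  have hne : (-1 : L) ≠ 1 := Ring.neg_one_ne_one_of_char_ne_two hL
  have hx := FiniteField.pow_dichotomy hL (Units.ne_zero x)
  have hy := FiniteField.pow_dichotomy hL (Units.ne_zero y)
  rw [quadChar_eq_ite hL, quadChar_eq_ite hL, quadChar_eq_ite hL, Units.val_mul, mul_pow]
  rcases hx with hx | hx <;> rcases hy with hy | hy <;> rw [hx, hy] <;> simp [hne]

lemma traceFormula {K F : Type*} [Field K] [Field F] [Fintype K] [Fintype F]
    [Algebra K F] (p q l : ℕ) [Fact p.Prime] [CharP F p] [CharP K p]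
    (hq : Fintype.card K = q) (hF : Fintype.card F = q ^ l)
    (hq3 : 2 < q) (hl0 : l ≠ 0) (x : F) :
    algebraMap K F (Algebra.trace K F x) = ∑ i ∈ Finset.range l, x ^ q ^ i := by
  obtain ⟨n, hp, hqn⟩ := FiniteField.card K p
  rw [hq] at hqn
  set g : F →+* F := (frobenius F p) ^ (n : ℕ) with hgdef
  have hg : ∀ z : F, g z = z ^ q := by
    intro z
    rw [hgdef, RingHom.coe_pow, iterate_frobenius, ← hqn]
  have hcomm : ∀ c : K, g (algebraMap K F c) = algebraMap K F c := by
    intro c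
    rw [hg, ← map_pow, ← hq, FiniteField.pow_card]
  set φ₀ : F →ₐ[K] F := ⟨g, hcomm⟩ with hφ₀def
  have hφ₀ : ∀ z : F, φ₀ z = z ^ q := hg
  have hinj0 : Function.Injective φ₀ := g.injective
  set φ : F ≃ₐ[K] F := AlgEquiv.ofBijective φ₀ (Finite.injective_iff_bijective.mp hinj0)
    with hφdef
  have hφ : ∀ (i : ℕ) (z : F), (φ ^ i) z = z ^ q ^ i := by
    intro i
    induction i with
    | zero => intro z; simp
    | succ i ih =>
      intro z
      rw [pow_succ, AlgEquiv.mul_apply]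
      have : φ z = z ^ q := hφ₀ z
      rw [this, ih, ← pow_mul, ← pow_succ']
  have hrank : Module.finrank K F = l := by
    have hc := Module.card_eq_pow_finrank (K := K) (V := F)
    rw [hq, hF] at hc
    exact (Nat.pow_right_injective (by omega) hc).symm
  have hcard : Fintype.card (F ≃ₐ[K] F) = l := by
    rw [← Nat.card_eq_fintype_card, IsGalois.card_aut_eq_finrank, hrank]
  have hbound : ∀ m : Fin l, q ^ (m : ℕ) < q ^ l - 1 := by
    intro m
    have h1 : 1 ≤ q ^ (m : ℕ) := Nat.one_le_pow _ _ (by omega)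
    have h2 : q ^ ((m : ℕ) + 1) ≤ q ^ l := Nat.pow_le_pow_right (by omega) m.2
    have h3 : q ^ (m : ℕ) * 3 ≤ q ^ (m : ℕ) * q := Nat.mul_le_mul_left _ (by omega)
    rw [← pow_succ] at h3
    omega
  have hinj : Function.Injective (fun i : Fin l => φ ^ (i : ℕ)) := by
    intro i j hij
    obtain ⟨ζ, hζ⟩ := IsCyclic.exists_generator (α := Fˣ)
    have horder : orderOf ζ = q ^ l - 1 := by
      rw [orderOf_eq_card_of_forall_mem_zpowers hζ, Nat.card_eq_fintype_card, Fintype.card_units, hF]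
    have hz : ζ ^ q ^ (i : ℕ) = ζ ^ q ^ (j : ℕ) := by
      have h := congrArg (fun σ : F ≃ₐ[K] F => σ (ζ : F)) hij
      simp only at h
      rw [hφ, hφ] at h
      exact Units.ext (by rw [Units.val_pow_eq_pow_val, Units.val_pow_eq_pow_val]; exact h)
    have hmod := pow_eq_pow_iff_modEq.mp hz
    rw [horder] at hmod
    have hb1 := hbound i
    have hb2 := hbound j
    have : q ^ (i : ℕ) = q ^ (j : ℕ) := by
      unfold Nat.ModEq at hmod
      rwa [Nat.mod_eq_of_lt hb1, Nat.mod_eq_of_lt hb2] at hmod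
    exact Fin.ext (Nat.pow_right_injective (by omega) this)
  have hbij : Function.Bijective (fun i : Fin l => φ ^ (i : ℕ)) :=
    (Fintype.bijective_iff_injective_and_card _).mpr
      ⟨hinj, by rw [Fintype.card_fin, hcard]⟩
  rw [trace_eq_sum_automorphisms x]
  calc ∑ σ : F ≃ₐ[K] F, σ x
      = ∑ i : Fin l, (φ ^ (i : ℕ)) x :=
        (Fintype.sum_bijective _ hbij _ _ (fun i => rfl)).symm
    _ = ∑ i : Fin l, x ^ q ^ (i : ℕ) := by
        refine Finset.sum_congr rfl fun i _ => hφ _ _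
    _ = ∑ i ∈ Finset.range l, x ^ q ^ i := Fin.sum_univ_eq_sum_range (fun i => x ^ q ^ i) l

/-- for `q` odd, `l` odd, `η` the quadratic character of
`𝔽_{q^l}^*`, `η₀` the quadratic character of `𝔽_q^*`, and `χ` a character of
`𝔽_{q^l}^*` trivial on `𝔽_q^*`,
`G_{𝔽_{q^l}}(χη) = G_{𝔽_q}(η₀) · ∑_{y ∈ R} χ(y)η(y)`,
where `R = {x ∈ 𝔽_{q^l}^* : tr_{q^l/q}(x) = 1}`. -/
theorem stmt17 {K F : Type*} [Field K] [Field F] [Fintype K] [Fintype F]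
    [Algebra K F] (p q l : ℕ) [Fact p.Prime] [CharP F p] [CharP K p]
    [Algebra (ZMod p) F] [Algebra (ZMod p) K]
    (hq : Fintype.card K = q) (hqodd : Odd q)
    (hF : Fintype.card F = q ^ l) (hl : Odd l)
    (ξ : ℂ) (hξ : IsPrimitiveRoot ξ p)
    (χ : Fˣ →* ℂ)
    (hχK : ∀ y : Kˣ, χ (Units.map (algebraMap K F : K →+* F).toMonoidHom y) = 1) :
    ∑ x : Fˣ, χ x * quadChar x * ξ ^ (Algebra.trace (ZMod p) F (x : F)).val =
      (∑ y : Kˣ, quadChar y * ξ ^ (Algebra.trace (ZMod p) K (y : K)).val) *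
        ∑ x ∈ (univ : Finset Fˣ).filter (fun x : Fˣ => relTrace q l (x : F) = 1),
          χ x * quadChar x := by
  classical
  have hq1 : 1 < q := by rw [← hq]; exact Fintype.one_lt_card
  have hq3 : 2 < q := by rcases hqodd with ⟨r, hr⟩; omega
  have hl0 : l ≠ 0 := by rintro rfl; simp [Nat.odd_iff] at hl
  obtain ⟨nK, hpp, hqn⟩ := FiniteField.card K p
  rw [hq] at hqn
  have hp2 : p ≠ 2 := by
    rintro rfl
    rw [hqn, Nat.odd_iff] at hqodd
    have heven : 2 ∣ 2 ^ (nK : ℕ) := dvd_pow_self 2 nK.ne_zero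
    omega
  have hK2 : ringChar K ≠ 2 := by rw [ringChar.eq K p]; exact hp2
  have hF2 : ringChar F ≠ 2 := by rw [ringChar.eq F p]; exact hp2
  have einj : Function.Injective (algebraMap K F) := (algebraMap K F).injective
  have halg : algebraMap (ZMod p) F = (algebraMap K F).comp (algebraMap (ZMod p) K) :=
    RingHom.ext_zmod _ _
  haveI : IsScalarTower (ZMod p) K F := IsScalarTower.of_algebraMap_eq' halg
  have htr : ∀ z : F, Algebra.trace (ZMod p) F z
      = Algebra.trace (ZMod p) K (Algebra.trace K F z) := fun z =>
    (Algebra.trace_trace z).symm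
  set fu : Kˣ →* Fˣ := Units.map (algebraMap K F : K →+* F).toMonoidHom with hfu
  have hmap : ∀ y : Kˣ, quadChar (fu y) = quadChar y := by
    intro y
    rw [quadChar_eq_ite hF2, quadChar_eq_ite hK2]
    have hval : ((fu y : Fˣ) : F) = algebraMap K F (y : K) := rfl
    have hcond : ((fu y : Fˣ) : F) ^ (Fintype.card F / 2) = 1
        ↔ (y : K) ^ (Fintype.card K / 2) = 1 := by
      rw [hval, hF, hq, ← map_pow, ← Units.val_pow_eq_pow_val,
        pow_card_div_two hq hqodd hl y, Units.val_pow_eq_pow_val]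
      constructor
      · intro h
        have := einj (h.trans (map_one (algebraMap K F)).symm)
        exact this
      · intro h; rw [h, map_one]
    rw [if_congr hcond rfl rfl]
  -- fiber scaling
  set S : K → ℂ := fun d =>
    ∑ x ∈ univ.filter (fun x : Fˣ => Algebra.trace K F (x : F) = d),
      χ x * quadChar x with hS
  have htKmul : ∀ (c : Kˣ) (x : Fˣ), Algebra.trace K F ((fu c * x : Fˣ) : F)
      = (c : K) * Algebra.trace K F (x : F) := by
    intro c x
    have hval : ((fu c * x : Fˣ) : F) = algebraMap K F (c : K) * (x : F) := rfl
    rw [hval, ← Algebra.smul_def, map_smul, smul_eq_mul]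
  have hfiber : ∀ (c : Kˣ) (d : K), S ((c : K) * d) = quadChar c * S d := by
    intro c d
    simp only [hS]
    rw [Finset.mul_sum]
    refine (Finset.sum_equiv (Equiv.mulLeft (fu c)) ?_ ?_).symm
    · intro x
      simp only [mem_filter, mem_univ, true_and, Equiv.coe_mulLeft]
      rw [htKmul]
      constructor
      · intro h; rw [h]
      · intro h; exact mul_left_cancel₀ (Units.ne_zero c) h
    · intro x _
      simp only [Equiv.coe_mulLeft]
      rw [map_mul, quadChar_mul hF2, hmap, hχK]
      ring
  have hscale : ∀ c : Kˣ, S (c : K) = quadChar c * S 1 := by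
    intro c
    have h := hfiber c 1
    rwa [mul_one] at h
  have hzero : S 0 = 0 := by
    obtain ⟨a, ha⟩ := FiniteField.exists_nonsquare (F := K) hK2
    have ha0 : a ≠ 0 := by rintro rfl; exact ha ⟨0, (mul_zero 0).symm⟩
    have hqu : quadChar (Units.mk0 a ha0) = -1 := by
      unfold quadChar
      rw [if_neg]
      rintro ⟨v, hv⟩
      exact ha ⟨(v : K), by rw [← Units.val_mul, ← hv, Units.val_mk0]⟩
    have h0 := hfiber (Units.mk0 a ha0) 0
    rw [mul_zero, hqu] at h0
    have h2 : (2 : ℂ) * S 0 = 0 := by linear_combination h0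
    exact (mul_eq_zero.mp h2).resolve_left two_ne_zero
  -- splitting sums over K
  have hsplit : ∀ H : K → ℂ, (∑ c : K, H c) = H 0 + ∑ c : Kˣ, H (c : K) := by
    intro H
    have himg : (univ.filter (fun c : K => ¬c = 0))
        = Finset.image (fun u : Kˣ => (u : K)) univ := by
      ext c
      simp only [mem_filter, mem_univ, true_and, mem_image]
      constructor
      · intro h; exact ⟨Units.mk0 c h, rfl⟩
      · rintro ⟨u, rfl⟩; exact Units.ne_zero u
    rw [← Finset.sum_filter_add_sum_filter_not univ (fun c : K => c = 0) H]
    congr 1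
    · have h0 : (univ.filter (fun c : K => c = 0)) = {0} := by ext c; simp
      rw [h0, Finset.sum_singleton]
    · rw [himg, Finset.sum_image (fun u _ v _ h => Units.ext h)]
  -- main computation
  have hfilter : (univ : Finset Fˣ).filter (fun x : Fˣ => relTrace q l (x : F) = 1)
      = (univ : Finset Fˣ).filter (fun x : Fˣ => Algebra.trace K F (x : F) = 1) := by
    ext x
    simp only [mem_filter, mem_univ, true_and]
    have hr : relTrace q l (x : F) = algebraMap K F (Algebra.trace K F (x : F)) :=
      (traceFormula p q l hq hF hq3 hl0 (x : F)).symm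
    rw [hr, ← map_one (algebraMap K F)]
    exact ⟨fun h => einj h, fun h => by rw [h]⟩
  calc ∑ x : Fˣ, χ x * quadChar x * ξ ^ (Algebra.trace (ZMod p) F (x : F)).val
      = ∑ x : Fˣ, χ x * quadChar x
          * ξ ^ (Algebra.trace (ZMod p) K (Algebra.trace K F (x : F))).val := by
        refine Finset.sum_congr rfl fun x _ => ?_
        rw [htr]
    _ = ∑ c : K, ∑ x ∈ univ.filter (fun x : Fˣ => Algebra.trace K F (x : F) = c),
          χ x * quadChar x
            * ξ ^ (Algebra.trace (ZMod p) K (Algebra.trace K F (x : F))).val :=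
        (Finset.sum_fiberwise univ (fun x : Fˣ => Algebra.trace K F (x : F)) _).symm
    _ = ∑ c : K, S c * ξ ^ (Algebra.trace (ZMod p) K c).val := by
        refine Finset.sum_congr rfl fun c _ => ?_
        rw [hS, Finset.sum_mul]
        refine Finset.sum_congr rfl fun x hx => ?_
        rw [(mem_filter.mp hx).2]
    _ = S 0 * ξ ^ (Algebra.trace (ZMod p) K (0 : K)).val
          + ∑ c : Kˣ, S (c : K) * ξ ^ (Algebra.trace (ZMod p) K (c : K)).val :=
        hsplit _
    _ = ∑ c : Kˣ, (quadChar c * S 1) * ξ ^ (Algebra.trace (ZMod p) K (c : K)).val := by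
        rw [hzero, zero_mul, zero_add]
        exact Finset.sum_congr rfl fun c _ => by rw [hscale]
    _ = (∑ y : Kˣ, quadChar y * ξ ^ (Algebra.trace (ZMod p) K (y : K)).val) * S 1 := by
        rw [Finset.sum_mul]
        exact Finset.sum_congr rfl fun c _ => by ring
    _ = (∑ y : Kˣ, quadChar y * ξ ^ (Algebra.trace (ZMod p) K (y : K)).val) *
        ∑ x ∈ (univ : Finset Fˣ).filter (fun x : Fˣ => relTrace q l (x : F) = 1),
          χ x * quadChar x := by
        rw [hfilter, hS]
end

section
/- Let q be an odd prime power, l odd, and X₁, X₂ subsets of 𝔽_{q^l}^*/𝔽_q^* with X₁ ∩ X₂ = ∅. Define 𝔻(X) = {x ∈ S_{𝔽_{q^l}} : π(x) ∈ X} ∪ {x ∈ N_{𝔽_{q^l}} : π(x) ∉ X}, where π: 𝔽_{q^l}^* → 𝔽_{q^l}^*/𝔽_q^* is the projection, and S, N are the nonzero squares and non-squares of 𝔽_{q^l}. If 𝔻(X₁) and 𝔻(X₂) are both Paley type group schemes in (𝔽_{q^l}, +), then 𝔻(X₁ ∪ X₂) is also a Paley type group scheme in (𝔽_{q^l}, +).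 -/
open Finset
open scoped Classical

/-- The formal sum `∑_{x ∈ s} x` in the integral group ring of `(F,+)`. -/
noncomputable def asum {F : Type*} [AddGroup F] [DecidableEq F] (s : Finset F) :
    AddMonoidAlgebra ℤ F :=
  ∑ x ∈ s, AddMonoidAlgebra.single x 1

/-- `D` is a Paley type group scheme in the finite additive group `F`:
`(1 + 2D^{(-1)})(1 + 2D) = |F| + (|F|-1)·F` in `ℤ[(F,+)]`. -/
def IsPaleyScheme {F : Type*} [AddGroup F] [Fintype F] [DecidableEq F]
    (D : Finset F) : Prop :=
  (1 + 2 • asum (D.image (fun x => -x))) * (1 + 2 • asum D) =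
    (Fintype.card F : ℤ) • 1 + ((Fintype.card F : ℤ) - 1) • asum (univ : Finset F)

/-- The subgroup `𝔽_q^*` of `𝔽_{q^l}^*`. -/
def baseSubgroup (K F : Type*) [Field K] [Field F] [Algebra K F] : Subgroup Fˣ :=
  (Units.map (algebraMap K F : K →+* F).toMonoidHom).range

/-- `𝔻(X) = {x ∈ S_{𝔽_{q^l}} : π(x) ∈ X} ∪ {x ∈ N_{𝔽_{q^l}} : π(x) ∉ X}`, for
`X ⊆ 𝔽_{q^l}^*/𝔽_q^*`, where `π` is the natural projection and `S`, `N` are the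
nonzero squares and non-squares of `𝔽_{q^l}`. -/
noncomputable def DX (K F : Type*) [Field K] [Field F] [Fintype K] [Fintype F]
    [Algebra K F] (X : Finset (Fˣ ⧸ baseSubgroup K F)) : Finset F :=
  ((univ : Finset Fˣ).filter (fun x : Fˣ =>
      (IsSquare (x : F) ↔ (QuotientGroup.mk x : Fˣ ⧸ baseSubgroup K F) ∈ X))).image
    (fun x : Fˣ => (x : F))

/-!
Evaluate `ℤ[(F,+)]` at the characters `x ↦ ψ (b * x)`, where `ψ = ψK ∘ φ` for a primitive
additive character `ψK` of `K` and a nonzero `K`-linear form `φ` on `F`. As `l` is odd, the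
quadratic character `η` of `F` restricts to that of `K`, so splitting a sum over `Fˣ` into cosets
of `Kˣ` turns the value of `1 + 2𝔻(X)` at `b ≠ 0` into `(2 T_X(b) - M(b)) γ`: here `T_X(b)` is the
sum over `c ∈ X` of the entries `η(u_c) η_K(φ(b u_c))` (`u_c ∈ c`) of the Singer weighing matrix,
`M = T_univ`, and `γ` is the quadratic Gauss sum of `K`. Since `γ² = η_K(-1) q` and
`M(b)² q = q^l`, `𝔻(X)` is of Paley type iff `T_X(b) ∈ {0, M(b)}` for every `b`. For disjoint
`X₁`, `X₂`, Parseval gives `∑_b T_{X₁}(b) T_{X₂}(b) = 0`; every term is `0` or `M(b)² ≥ 0`, so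
all of them vanish, and `T_{X₁ ∪ X₂} = T_{X₁} + T_{X₂}` again takes values in `{0, M(b)}`.
-/

lemma sum_eq_add_sum_units {G₀ M : Type*} [GroupWithZero G₀] [Fintype G₀] [AddCommMonoid M]
    (f : G₀ → M) : ∑ x, f x = f 0 + ∑ x : G₀ˣ, f x := by
  rw [← Finset.add_sum_erase _ _ (mem_univ 0)]
  congr 1
  exact ((Fintype.sum_equiv unitsEquivNeZero _ _ fun _ => rfl).trans
    (Finset.sum_subtype ((univ : Finset G₀).erase 0) (by simp) f).symm).symm

lemma gaussSum_mulShift_of_isQuadratic {R R' : Type*} [Field R] [Fintype R] [CommRing R']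
    [IsDomain R'] {χ : MulChar R R'} (hχ : χ ≠ 1) (hχq : χ.IsQuadratic) (ψ : AddChar R R')
    (a : R) : gaussSum χ (ψ.mulShift a) = χ a * gaussSum χ ψ := by
  rcases eq_or_ne a 0 with rfl | ha
  · simp [gaussSum, MulChar.map_zero, MulChar.sum_eq_zero_of_ne_one hχ]
  · simpa [hχq.inv] using gaussSum_mulShift_eq χ ψ (Units.mk0 a ha)

lemma quadraticChar_ringHomComp_ne_one {R E : Type*} [Field R] [Fintype R] [Field E]
    [CharZero E] (hR : ringChar R ≠ 2) :
    (quadraticChar R).ringHomComp (Int.castRingHom E) ≠ 1 := fun h =>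
  quadraticChar_ne_one hR ((MulChar.ringHomComp_eq_one_iff Int.cast_injective).mp h)

lemma intCast_quadraticChar_neg_one_sq {R E : Type*} [Field R] [Fintype R] [Ring E] :
    ((quadraticChar R (-1) : ℤ) : E) ^ 2 = 1 := by
  rw [← Int.cast_pow, quadraticChar_sq_one (neg_ne_zero.mpr one_ne_zero), Int.cast_one]

lemma exists_odd_pow_div_two {q l : ℕ} (hq : Odd q) (hl : Odd l) :
    ∃ t, Odd t ∧ q ^ l / 2 = q / 2 * t := by
  obtain ⟨r, rfl⟩ := hq
  refine ⟨∑ i ∈ range l, (2 * r + 1) ^ i, ?_, ?_⟩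
  · rw [Finset.odd_sum_iff_odd_card_odd,
      Finset.filter_true_of_mem fun i _ => (odd_two_mul_add_one r).pow, card_range]
    exact hl
  · rw [← geom_sum_mul_add (2 * r) l]
    set t := ∑ i ∈ range l, (2 * r + 1) ^ i
    rw [show t * (2 * r) + 1 = 2 * (r * t) + 1 by ring, show (2 * r + 1) / 2 = r by omega]
    omega

lemma quadraticChar_algebraMap {K F : Type*} [Field K] [Fintype K] [Field F] [Fintype F]
    [Algebra K F] (hK : ringChar K ≠ 2) {l : ℕ} (hcard : Fintype.card F = Fintype.card K ^ l)
    (hl : Odd l) (a : K) : quadraticChar F (algebraMap K F a) = quadraticChar K a := by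
  rcases eq_or_ne a 0 with rfl | ha
  · simp
  have hF : ringChar F ≠ 2 := Algebra.ringChar_eq K F ▸ hK
  -- Euler's criterion, with `(q^l - 1) / 2 = t (q - 1) / 2` for an odd `t`.
  obtain ⟨t, ht, hdiv⟩ :=
    exists_odd_pow_div_two (Nat.odd_iff.mpr (FiniteField.odd_card_of_char_ne_two hK)) hl
  rw [quadraticChar_eq_pow_of_char_ne_two hF (by simpa),
    quadraticChar_eq_pow_of_char_ne_two hK ha, hcard, hdiv, pow_mul, ← map_pow]
  rcases FiniteField.pow_dichotomy hK ha with h | h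
  · simp [h]
  · simp [h, ht.neg_one_pow, Ring.neg_one_ne_one_of_char_ne_two hF,
      Ring.neg_one_ne_one_of_char_ne_two hK]

section Fourier

variable {F E : Type*} [Field F] [Field E] (ψ : AddChar F E)

noncomputable def fourierEval (b : F) : AddMonoidAlgebra ℤ F →ₐ[ℤ] E :=
  AddMonoidAlgebra.lift ℤ E F (ψ.mulShift b).toMonoidHom

lemma fourierEval_apply [Fintype F] (b : F) (u : AddMonoidAlgebra ℤ F) :
    fourierEval ψ b u = ∑ x, (u.coeff x : E) * ψ (b * x) := by
  rw [fourierEval, AddMonoidAlgebra.lift_apply, Finsupp.sum_fintype _ _ (by simp)]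
  simp [zsmul_eq_mul, mul_comm b]

lemma fourierEval_asum (b : F) (s : Finset F) :
    fourierEval ψ b (asum s) = ∑ x ∈ s, ψ (b * x) := by
  simp [asum, fourierEval, AddMonoidAlgebra.lift_single, mul_comm b]

lemma fourierEval_one_add_two_smul_asum_image_neg (b : F) (s : Finset F) :
    fourierEval ψ b (1 + 2 • asum (s.image (fun x => -x))) =
      fourierEval ψ (-b) (1 + 2 • asum s) := by
  simp only [map_add, map_one, map_nsmul, fourierEval_asum]
  rw [Finset.sum_image fun x _ y _ => neg_inj.mp]
  simp

variable {ψ}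

lemma sum_mul_sum_mulShift_neg [Fintype F] (hψ : ψ.IsPrimitive) {ι : Type*} [Fintype ι]
    {e : ι → F} (he : Function.Injective e) (a a' : ι → E) :
    ∑ b, (∑ i, a i * ψ (b * e i)) * (∑ j, a' j * ψ (-b * e j)) =
      Fintype.card F * ∑ i, a i * a' i := by
  have orth : ∀ i j, ∑ b, ψ (b * (e i - e j)) = if i = j then (Fintype.card F : E) else 0 := by
    intro i j
    rw [AddChar.sum_mulShift _ hψ, sub_eq_zero, he.eq_iff]
    split_ifs <;> simp
  calc ∑ b, (∑ i, a i * ψ (b * e i)) * (∑ j, a' j * ψ (-b * e j))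
      = ∑ i, ∑ j, a i * a' j * ∑ b, ψ (b * (e i - e j)) := by
        simp_rw [Finset.sum_mul_sum, Finset.mul_sum]
        rw [Finset.sum_comm]
        refine Finset.sum_congr rfl fun i _ => ?_
        rw [Finset.sum_comm]
        refine Finset.sum_congr rfl fun j _ => Finset.sum_congr rfl fun b _ => ?_
        rw [mul_sub, sub_eq_add_neg, AddChar.map_add_eq_mul, neg_mul]
        ring
    _ = Fintype.card F * ∑ i, a i * a' i := by
        simp [orth, Finset.mul_sum, mul_comm]

lemma eq_of_forall_fourierEval_eq [Fintype F] [CharZero E] (hψ : ψ.IsPrimitive)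
    {u v : AddMonoidAlgebra ℤ F} (h : ∀ b, fourierEval ψ b u = fourierEval ψ b v) : u = v := by
  rw [← sub_eq_zero]
  ext y
  have hzero : ∀ b, fourierEval ψ b (u - v) = 0 := fun b => by rw [map_sub, h, sub_self]
  have key := sum_mul_sum_mulShift_neg hψ Function.injective_id
    (fun x => ((u - v).coeff x : E)) (fun x => if x = y then 1 else 0)
  simp only [id, ← fourierEval_apply, hzero] at key
  have hy : ((u - v).coeff y : E) = 0 := by simpa using key
  exact_mod_cast hy

end Fourier

section PaleyFactor

variable {K F E : Type*} [Field K] [Field F] [Fintype F] [Algebra K F] [Field E]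

noncomputable def partialGaussSum (ψ : AddChar F E) (X : Finset (Fˣ ⧸ baseSubgroup K F))
    (b : F) : E :=
  ∑ x : Fˣ, (if (x : Fˣ ⧸ baseSubgroup K F) ∈ X then (quadraticChar F x : E) else 0) * ψ (b * x)

lemma ite_isSquare_iff_eq {x : F} (hx : x ≠ 0) (P : Prop) [Decidable P] :
    (if (IsSquare x ↔ P) then (2 : E) else 0) =
      1 + 2 * (if P then (quadraticChar F x : E) else 0) - quadraticChar F x := by
  by_cases hs : IsSquare x
  · rw [(quadraticChar_one_iff_isSquare hx).mpr hs]
    by_cases hP : P <;> simp [hs, hP]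
  · rw [quadraticChar_neg_one_iff_not_isSquare.mpr hs]
    by_cases hP : P <;> simp [hs, hP] <;> norm_num

lemma fourierEval_one_add_two_smul_asum_DX [Fintype K] (ψ : AddChar F E)
    (X : Finset (Fˣ ⧸ baseSubgroup K F)) (b : F) :
    fourierEval ψ b (1 + 2 • asum (DX K F X)) =
      ∑ x, ψ (b * x) + 2 * partialGaussSum ψ X b -
        partialGaussSum ψ (univ : Finset (Fˣ ⧸ baseSubgroup K F)) b := by
  have hDX : ∑ d ∈ DX K F X, ψ (b * d) = ∑ x : Fˣ,
      (if (IsSquare (x : F) ↔ (x : Fˣ ⧸ baseSubgroup K F) ∈ X) then 1 else 0) * ψ (b * x) := by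
    rw [DX, Finset.sum_image fun x _ y _ h => Units.ext h, Finset.sum_filter]
    simp
  rw [map_add, map_one, map_nsmul, fourierEval_asum, nsmul_eq_mul, Nat.cast_ofNat, hDX,
    sum_eq_add_sum_units (fun x : F => ψ (b * x)), mul_zero, AddChar.map_zero_eq_one,
    partialGaussSum, partialGaussSum, Finset.mul_sum, Finset.mul_sum, add_assoc,
    ← Finset.sum_add_distrib, add_sub_assoc, ← Finset.sum_sub_distrib]
  congr 1
  refine Finset.sum_congr rfl fun x _ => ?_
  rw [if_pos (mem_univ _), ← mul_assoc, mul_ite, mul_one, mul_zero,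
    ite_isSquare_iff_eq x.ne_zero]
  ring

lemma gaussSum_mulShift_eq_partialGaussSum (ψ : AddChar F E) (b : F) :
    gaussSum ((quadraticChar F).ringHomComp (Int.castRingHom E)) (ψ.mulShift b) =
      partialGaussSum ψ (univ : Finset (Fˣ ⧸ baseSubgroup K F)) b := by
  rw [gaussSum, sum_eq_add_sum_units]
  simp [partialGaussSum, mul_comm b]

lemma sum_partialGaussSum_mul_neg_eq_zero [CharZero E] {ψ : AddChar F E} (hψ : ψ.IsPrimitive)
    {X₁ X₂ : Finset (Fˣ ⧸ baseSubgroup K F)} (h : Disjoint X₁ X₂) :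
    ∑ b, partialGaussSum ψ X₁ b * partialGaussSum ψ X₂ (-b) = 0 := by
  simp only [partialGaussSum]
  rw [sum_mul_sum_mulShift_neg hψ Units.val_injective]
  refine mul_eq_zero_of_right _ (Finset.sum_eq_zero fun x _ => ?_)
  by_cases hx : (x : Fˣ ⧸ baseSubgroup K F) ∈ X₁
  · simp [Finset.disjoint_left.mp h hx]
  · simp [hx]

end PaleyFactor

section Cosets

variable {K F : Type*} [Field K] [Field F] [Algebra K F]

lemma mk_out_mul_units_map (c : Fˣ ⧸ baseSubgroup K F) (k : Kˣ) :
    (((Quotient.out c : Fˣ) * Units.map (algebraMap K F).toMonoidHom k : Fˣ) :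
      Fˣ ⧸ baseSubgroup K F) = c :=
  (QuotientGroup.mk_mul_of_mem _ (MonoidHom.mem_range.mpr ⟨k, rfl⟩)).trans
    (QuotientGroup.out_eq' c)

lemma sum_units_eq_sum_quotient [Fintype K] [Fintype F] {M : Type*} [AddCommMonoid M]
    (f : Fˣ → M) :
    ∑ x, f x = ∑ c : Fˣ ⧸ baseSubgroup K F, ∑ k : Kˣ,
      f (Quotient.out c * Units.map (algebraMap K F).toMonoidHom k) := by
  rw [← Fintype.sum_prod_type']
  refine (Fintype.sum_bijective (fun p : (Fˣ ⧸ baseSubgroup K F) × Kˣ =>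
    (Quotient.out p.1 : Fˣ) * Units.map (algebraMap K F).toMonoidHom p.2) ⟨?_, ?_⟩ _ _
      fun _ => rfl).symm
  · rintro ⟨c, k⟩ ⟨c', k'⟩ h
    obtain rfl : c = c' := by
      rw [← mk_out_mul_units_map c k, ← mk_out_mul_units_map c' k']
      exact congrArg _ h
    simpa using Units.map_injective (algebraMap K F).injective (mul_left_cancel h)
  · intro x
    obtain ⟨k, hk⟩ := QuotientGroup.eq.mp (QuotientGroup.out_eq' (x : Fˣ ⧸ baseSubgroup K F))
    exact ⟨(x, k), by dsimp only; rw [hk, mul_inv_cancel_left]⟩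

lemma isPrimitive_compAddMonoidHom {E : Type*} [CommMonoid E] {ψK : AddChar K E}
    {φ : F →ₗ[K] K} (hψK : ψK.IsPrimitive) (hφ : φ ≠ 0) :
    (ψK.compAddMonoidHom φ.toAddMonoidHom).IsPrimitive := by
  refine AddChar.IsPrimitive.of_ne_one fun h => hψK one_ne_zero ?_
  ext a
  obtain ⟨y, rfl⟩ := LinearMap.surjective_of_ne_zero hφ a
  simpa using DFunLike.congr_fun h y

end Cosets

section Singer

variable {K F : Type*} [Field K] [Field F] [Fintype K] [Fintype F] [Algebra K F]

-- The representative `Quotient.out c` is immaterial: `η_F` and `η_K` agree on `Kˣ`.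
noncomputable def singerWeight (φ : F →ₗ[K] K) (b : F) (c : Fˣ ⧸ baseSubgroup K F) : ℤ :=
  quadraticChar F ((Quotient.out c : Fˣ) : F) * quadraticChar K (φ (b * (Quotient.out c : Fˣ)))

noncomputable def singerSum (φ : F →ₗ[K] K) (X : Finset (Fˣ ⧸ baseSubgroup K F)) (b : F) : ℤ :=
  ∑ c ∈ X, singerWeight φ b c

lemma singerSum_apply_zero (φ : F →ₗ[K] K) (X : Finset (Fˣ ⧸ baseSubgroup K F)) :
    singerSum φ X 0 = 0 := by
  simp [singerSum, singerWeight]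

lemma singerSum_union [DecidableEq (Fˣ ⧸ baseSubgroup K F)] (φ : F →ₗ[K] K)
    {X₁ X₂ : Finset (Fˣ ⧸ baseSubgroup K F)} (h : Disjoint X₁ X₂) (b : F) :
    singerSum φ (X₁ ∪ X₂) b = singerSum φ X₁ b + singerSum φ X₂ b :=
  Finset.sum_union h

lemma singerSum_neg (φ : F →ₗ[K] K) (X : Finset (Fˣ ⧸ baseSubgroup K F)) (b : F) :
    singerSum φ X (-b) = quadraticChar K (-1) * singerSum φ X b := by
  simp only [singerSum, singerWeight, Finset.mul_sum]
  refine Finset.sum_congr rfl fun c _ => ?_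
  rw [neg_mul, map_neg, ← neg_one_mul, map_mul]
  ring

variable {E : Type*} [Field E] [CharZero E] (ψK : AddChar K E) (φ : F →ₗ[K] K)

local notation "γ" => gaussSum (MulChar.ringHomComp (quadraticChar K) (Int.castRingHom E)) ψK

lemma sum_units_mul_algebraMap_eq
    (hres : ∀ a : K, quadraticChar F (algebraMap K F a) = quadraticChar K a)
    (hK : ringChar K ≠ 2) (b u : F) :
    ∑ k : Kˣ,
        (quadraticChar F (u * algebraMap K F k) : E) * ψK (φ (b * (u * algebraMap K F k))) =
      (quadraticChar F u * quadraticChar K (φ (b * u)) : ℤ) * γ := by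
  set χ := (quadraticChar K).ringHomComp (Int.castRingHom E)
  have hterm : ∀ k : Kˣ,
      (quadraticChar F (u * algebraMap K F k) : E) * ψK (φ (b * (u * algebraMap K F k))) =
        quadraticChar F u * (χ k * ψK.mulShift (φ (b * u)) k) := by
    intro k
    have hφ : φ (b * (u * algebraMap K F k)) = φ (b * u) * k := by
      rw [← mul_assoc, mul_comm, ← Algebra.smul_def, map_smul, smul_eq_mul, mul_comm]
    rw [map_mul, hres, hφ, AddChar.mulShift_apply, MulChar.ringHomComp_apply, eq_intCast,
      Int.cast_mul]
    ring
  calc _ = quadraticChar F u * gaussSum χ (ψK.mulShift (φ (b * u))) := by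
        rw [Finset.sum_congr rfl fun k _ => hterm k, ← Finset.mul_sum, gaussSum,
          sum_eq_add_sum_units (fun a => χ a * ψK.mulShift (φ (b * u)) a), MulChar.map_zero,
          zero_mul, zero_add]
    _ = (quadraticChar F u * quadraticChar K (φ (b * u)) : ℤ) * γ := by
        rw [gaussSum_mulShift_of_isQuadratic (quadraticChar_ringHomComp_ne_one hK)
          ((quadraticChar_isQuadratic K).comp _)]
        simp [mul_assoc]

lemma partialGaussSum_eq
    (hres : ∀ a : K, quadraticChar F (algebraMap K F a) = quadraticChar K a)
    (hK : ringChar K ≠ 2) (X : Finset (Fˣ ⧸ baseSubgroup K F)) (b : F) :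
    partialGaussSum (ψK.compAddMonoidHom φ.toAddMonoidHom) X b = singerSum φ X b * γ := by
  rw [partialGaussSum, sum_units_eq_sum_quotient (K := K), singerSum, Int.cast_sum, Finset.sum_mul]
  simp only [mk_out_mul_units_map, ite_mul, zero_mul, Finset.sum_ite_irrel,
    Finset.sum_const_zero]
  simp only [AddChar.compAddMonoidHom_apply, LinearMap.toAddMonoidHom_coe, Units.val_mul,
    Units.coe_map, RingHom.toMonoidHom_eq_coe, MonoidHom.coe_coe,
    sum_units_mul_algebraMap_eq ψK φ hres hK]
  exact Fintype.sum_ite_mem _ _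

lemma gaussSum_quadraticChar_sq (hK : ringChar K ≠ 2) (hψK : ψK.IsPrimitive) :
    γ ^ 2 = quadraticChar K (-1) * Fintype.card K := by
  rw [gaussSum_sq (quadraticChar_ringHomComp_ne_one hK) ((quadraticChar_isQuadratic K).comp _) hψK]
  simp

lemma singerSum_univ_sq_mul_card
    (hres : ∀ a : K, quadraticChar F (algebraMap K F a) = quadraticChar K a)
    (hK : ringChar K ≠ 2) (hψK : ψK.IsPrimitive) (hφ : φ ≠ 0) {b : F} (hb : b ≠ 0) :
    singerSum φ univ b ^ 2 * Fintype.card K = Fintype.card F := by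
  have hsq := gaussSum_sq
    (quadraticChar_ringHomComp_ne_one (E := E) (Algebra.ringChar_eq K F ▸ hK))
    ((quadraticChar_isQuadratic F).comp _)
    (AddChar.IsPrimitive.of_ne_one (isPrimitive_compAddMonoidHom hψK hφ hb))
  rw [gaussSum_mulShift_eq_partialGaussSum (K := K), partialGaussSum_eq ψK φ hres hK, mul_pow,
    gaussSum_quadraticChar_sq ψK hK hψK, MulChar.ringHomComp_apply,
    show quadraticChar F (-1) = quadraticChar K (-1) by simpa using hres (-1)] at hsq
  have hσ := intCast_quadraticChar_neg_one_sq (R := K) (E := E)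
  have : ((singerSum φ univ b : ℤ) : E) ^ 2 * Fintype.card K = Fintype.card F := by
    linear_combination (quadraticChar K (-1) : E) * hsq -
      (((singerSum φ univ b : ℤ) : E) ^ 2 * Fintype.card K - Fintype.card F) * hσ
  exact_mod_cast this

lemma fourierEval_DX
    (hres : ∀ a : K, quadraticChar F (algebraMap K F a) = quadraticChar K a)
    (hK : ringChar K ≠ 2) (hψK : ψK.IsPrimitive) (hφ : φ ≠ 0)
    (X : Finset (Fˣ ⧸ baseSubgroup K F)) (b : F) :
    fourierEval (ψK.compAddMonoidHom φ.toAddMonoidHom) b (1 + 2 • asum (DX K F X)) =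
      (if b = 0 then (Fintype.card F : E) else 0) +
        ((2 * singerSum φ X b - singerSum φ univ b : ℤ) : E) * γ := by
  rw [fourierEval_one_add_two_smul_asum_DX, partialGaussSum_eq ψK φ hres hK,
    partialGaussSum_eq ψK φ hres hK]
  simp_rw [mul_comm b]
  rw [AddChar.sum_mulShift b (isPrimitive_compAddMonoidHom hψK hφ)]
  push_cast
  ring

lemma fourierEval_paley_eq_iff
    (hres : ∀ a : K, quadraticChar F (algebraMap K F a) = quadraticChar K a)
    (hK : ringChar K ≠ 2) (hψK : ψK.IsPrimitive) (hφ : φ ≠ 0)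
    (X : Finset (Fˣ ⧸ baseSubgroup K F)) (b : F) :
    fourierEval (ψK.compAddMonoidHom φ.toAddMonoidHom) b
        ((1 + 2 • asum ((DX K F X).image (fun x => -x))) * (1 + 2 • asum (DX K F X))) =
      fourierEval (ψK.compAddMonoidHom φ.toAddMonoidHom) b
        ((Fintype.card F : ℤ) • 1 + ((Fintype.card F : ℤ) - 1) • asum (univ : Finset F)) ↔
      singerSum φ X b * (singerSum φ X b - singerSum φ univ b) = 0 := by
  rw [map_mul, fourierEval_one_add_two_smul_asum_image_neg, fourierEval_DX ψK φ hres hK hψK hφ,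
    fourierEval_DX ψK φ hres hK hψK hφ, map_add, map_zsmul, map_zsmul, map_one, fourierEval_asum]
  simp_rw [mul_comm b]
  rw [AddChar.sum_mulShift b (isPrimitive_compAddMonoidHom hψK hφ)]
  rcases eq_or_ne b 0 with rfl | hb
  · simp only [neg_zero, if_true, singerSum_apply_zero, mul_zero, sub_self, Int.cast_zero,
      zero_mul, add_zero, zsmul_eq_mul, Int.cast_natCast, mul_one, Int.cast_sub, Int.cast_one,
      iff_true]
    ring
  simp only [hb, neg_eq_zero, if_false, singerSum_neg, zsmul_eq_mul, Nat.cast_zero, mul_zero,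
    zero_add, add_zero, mul_one, Int.cast_natCast]
  rw [← sub_eq_zero]
  set T := singerSum φ X b
  set M := singerSum φ univ b
  have hγ := gaussSum_quadraticChar_sq ψK hK hψK
  have hM : ((M : ℤ) : E) ^ 2 * Fintype.card K = Fintype.card F := by
    exact_mod_cast singerSum_univ_sq_mul_card ψK φ hres hK hψK hφ hb
  have hσ := intCast_quadraticChar_neg_one_sq (R := K) (E := E)
  have key : (((quadraticChar K (-1) * (2 * T - M) : ℤ) : E) * γ) *
        (((2 * T - M : ℤ) : E) * γ) -
        Fintype.card F = 4 * Fintype.card K * ((T * (T - M) : ℤ) : E) := by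
    push_cast
    linear_combination ((quadraticChar K (-1) : ℤ) : E) * (2 * (T : E) - M) ^ 2 * hγ +
      (2 * (T : E) - M) ^ 2 * Fintype.card K * hσ + hM
  rw [show 2 * (quadraticChar K (-1) * T) - quadraticChar K (-1) * M =
    quadraticChar K (-1) * (2 * T - M) by ring, key, mul_eq_zero, Int.cast_eq_zero,
    or_iff_right (by simp [Fintype.card_ne_zero])]

lemma isPaleyScheme_DX_iff
    (hres : ∀ a : K, quadraticChar F (algebraMap K F a) = quadraticChar K a)
    (hK : ringChar K ≠ 2) (hψK : ψK.IsPrimitive) (hφ : φ ≠ 0)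
    (X : Finset (Fˣ ⧸ baseSubgroup K F)) :
    IsPaleyScheme (DX K F X) ↔
      ∀ b, singerSum φ X b * (singerSum φ X b - singerSum φ univ b) = 0 :=
  ⟨fun h b => (fourierEval_paley_eq_iff ψK φ hres hK hψK hφ X b).mp (congrArg _ h),
    fun h => eq_of_forall_fourierEval_eq (isPrimitive_compAddMonoidHom hψK hφ)
      fun b => (fourierEval_paley_eq_iff ψK φ hres hK hψK hφ X b).mpr (h b)⟩

lemma sum_singerSum_mul_eq_zero
    (hres : ∀ a : K, quadraticChar F (algebraMap K F a) = quadraticChar K a)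
    (hK : ringChar K ≠ 2) (hψK : ψK.IsPrimitive) (hφ : φ ≠ 0)
    {X₁ X₂ : Finset (Fˣ ⧸ baseSubgroup K F)} (h : Disjoint X₁ X₂) :
    ∑ b, singerSum φ X₁ b * singerSum φ X₂ b = 0 := by
  have h0 := sum_partialGaussSum_mul_neg_eq_zero (isPrimitive_compAddMonoidHom hψK hφ) h
  simp only [partialGaussSum_eq ψK φ hres hK, singerSum_neg] at h0
  have hγ := gaussSum_quadraticChar_sq ψK hK hψK
  have hσ := intCast_quadraticChar_neg_one_sq (R := K) (E := E)
  have key : ((∑ b, singerSum φ X₁ b * singerSum φ X₂ b : ℤ) : E) * Fintype.card K = 0 := by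
    rw [← h0, Int.cast_sum, Finset.sum_mul]
    refine Finset.sum_congr rfl fun b _ => ?_
    push_cast
    linear_combination
      -((singerSum φ X₁ b : E) * singerSum φ X₂ b * (quadraticChar K (-1) : E)) * hγ -
        (singerSum φ X₁ b : E) * singerSum φ X₂ b * Fintype.card K * hσ
  rw [mul_eq_zero, Int.cast_eq_zero, or_iff_left (by simp [Fintype.card_ne_zero])] at key
  exact key

end Singer

lemma add_mul_add_sub_eq_zero {ι : Type*} [Fintype ι] {T₁ T₂ M : ι → ℤ}
    (h₁ : ∀ i, T₁ i * (T₁ i - M i) = 0) (h₂ : ∀ i, T₂ i * (T₂ i - M i) = 0)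
    (h : ∑ i, T₁ i * T₂ i = 0) (i : ι) : (T₁ i + T₂ i) * (T₁ i + T₂ i - M i) = 0 := by
  have hnonneg : ∀ j, 0 ≤ T₁ j * T₂ j := by
    intro j
    rcases mul_eq_zero.mp (h₁ j) with h1 | h1
    · simp [h1]
    rcases mul_eq_zero.mp (h₂ j) with h2 | h2
    · simp [h2]
    rw [sub_eq_zero.mp h1, sub_eq_zero.mp h2]
    exact mul_self_nonneg _
  have hzero := (Finset.sum_eq_zero_iff_of_nonneg fun j _ => hnonneg j).mp h i (mem_univ i)
  linear_combination h₁ i + h₂ i + 2 * hzero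

/-- if `X₁ ∩ X₂ = ∅` and `𝔻(X₁)`, `𝔻(X₂)` are Paley type group
schemes in `(𝔽_{q^l},+)`, so is `𝔻(X₁ ∪ X₂)`. -/
theorem stmt18 {K F : Type*} [Field K] [Field F] [Fintype K] [Fintype F]
    [Algebra K F] (q l : ℕ) (hq : Fintype.card K = q) (hqodd : Odd q)
    (hF : Fintype.card F = q ^ l) (hl : Odd l)
    (X₁ X₂ : Finset (Fˣ ⧸ baseSubgroup K F)) (hdisj : X₁ ∩ X₂ = ∅)
    (h1 : IsPaleyScheme (DX K F X₁)) (h2 : IsPaleyScheme (DX K F X₂)) :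
    IsPaleyScheme (DX K F (X₁ ∪ X₂)) := by
  have hK : ringChar K ≠ 2 := fun h =>
    Nat.not_even_iff_odd.mpr hqodd (hq ▸ Nat.even_iff.mpr (FiniteField.even_card_of_char_two h))
  have hres := quadraticChar_algebraMap (F := F) hK (by rw [hF, hq]) hl
  obtain ⟨φ, hφ1⟩ : ∃ φ : F →ₗ[K] K, φ 1 ≠ 0 :=
    Module.Projective.exists_dual_ne_zero K one_ne_zero
  have hφ : φ ≠ 0 := fun h => hφ1 (by rw [h, LinearMap.zero_apply])
  have hchar : ringChar ℚ ≠ ringChar K := by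
    rw [ringChar.eq_zero]
    exact (CharP.char_is_prime K _).ne_zero.symm
  let ψK := (AddChar.FiniteField.primitiveChar K ℚ hchar).char
  have hψK : ψK.IsPrimitive := (AddChar.FiniteField.primitiveChar K ℚ hchar).prim
  have hdisj' : Disjoint X₁ X₂ := Finset.disjoint_iff_inter_eq_empty.mpr hdisj
  rw [isPaleyScheme_DX_iff ψK φ hres hK hψK hφ] at h1 h2 ⊢
  intro b
  rw [singerSum_union φ hdisj' b]
  exact add_mul_add_sub_eq_zero h1 h2 (sum_singerSum_mul_eq_zero ψK φ hres hK hψK hφ hdisj') b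
end
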